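/- arXiv:2308.05933 — 2 statements merged into one kernel-verified Lean document; each statement's English description precedes it below -/
import Mathlib

section
/- Let A be an MPFS algorithm for OFA(S,1) on a metric space with |S| = k, σ = r_1⋯r_k a request sequence of full length, i an index and s ∈ F_{i−1}(A) with s ≠ s_A(r_i;σ), and let t*, a_t, h_t (i ≤ t ≤ t*) be as given by the singleton-difference lemma for the hybrid H_{i,s}. Then: (P1) for each i ≤ t ≤ t*−1, a_t = a_{t+1} or h_t = h_{t+1}; (P2) for each i ≤ t ≤ t*−1, if a_t ≠ a_{t+1} then A matches r_{t+1} with a_t and H_{i,s} matches r_{t+1} with a_{t+1}, and if h_t ≠ h_{t+1} then A matches r_{t+1} with h_{t+1} and H_{i,s} matches r_{t+1} with h_t; and (P3) A matches r_{t*+1} with a_{t*} and H_{i,s} matches r_{t*+1} with h_{t*}. -/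
noncomputable section

namespace OFA

variable {X : Type*} [MetricSpace X] [DecidableEq X]

/-- Decrease the remaining capacity of server `m` by one. -/
def decCap (c : X → ℕ) (m : X) : X → ℕ := fun x => if x = m then c x - 1 else c x

/-- Remaining capacities after a list of matches. -/
def useCaps : (X → ℕ) → List X → (X → ℕ)
  | c, [] => c
  | c, m :: ms => useCaps (decCap c m) ms

/-- The set of servers that are still free. -/
def freeOf (S : Finset X) (c : X → ℕ) : Finset X := S.filter fun x => 0 < c x

/-- Run an algorithm given by a choice function `f` (mapping the position of the
current request and the current set of free servers to the chosen server)
on a request sequence, producing the list of matched servers. -/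
def runC (S : Finset X) (f : X → Finset X → X) : (X → ℕ) → List X → List X
  | _, [] => []
  | c, r :: rs => f r (freeOf S c) :: runC S f (decCap c (f r (freeOf S c))) rs

/-- Total cost incurred by the algorithm on a request sequence. -/
def algCost (S : Finset X) (f : X → Finset X → X) (c : X → ℕ) (σ : List X) : ℝ :=
  ((σ.zip (runC S f c σ)).map fun p => dist p.1 p.2).sum

def totalCap (S : Finset X) (c : X → ℕ) : ℕ := ∑ x ∈ S, c x

/-- A valid request sequence: at most as many requests as total capacity. -/
def ValidSeq (S : Finset X) (c : X → ℕ) (σ : List X) : Prop := σ.length ≤ totalCap S c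

/-- A valid (offline) assignment of requests to servers. -/
def ValidAssign (S : Finset X) (c : X → ℕ) (σ : List X) (m : ℕ → X) : Prop :=
  (∀ i < σ.length, m i ∈ S) ∧
  ∀ x ∈ S, ((List.range σ.length).filter fun i => m i = x).length ≤ c x

def assignCost (σ : List X) (m : ℕ → X) : ℝ :=
  ∑ i : Fin σ.length, dist (σ.get i) (m i)

/-- Cost of an optimal offline assignment. -/
def Opt (S : Finset X) (c : X → ℕ) (σ : List X) : ℝ :=
  sInf { t | ∃ m, ValidAssign S c σ m ∧ assignCost σ m = t }

/-- The set of servers still free after the first `t` matches of `ms`. -/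
def freeAfter (S : Finset X) (c : X → ℕ) (ms : List X) (t : ℕ) : Finset X :=
  S.filter fun x => (ms.take t).count x < c x

/-- A choice function is an MPFS algorithm if it is given by a family of linear
orders (priorities, encoded by an injective rank function) on the servers, one for
each request position, and selects the free server with the highest priority. -/
def IsMPFS (S : Finset X) (f : X → Finset X → X) : Prop :=
  ∃ rank : X → X → ℕ,
    (∀ r : X, Set.InjOn (rank r) (S : Set X)) ∧
    ∀ (r : X) (F : Finset X), F ⊆ S → F.Nonempty →
      f r F ∈ F ∧ ∀ y ∈ F, rank r (f r F) ≤ rank r y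

/-- The list of matches of the hybrid algorithm `H_{i,s}` (with `i` 1-indexed):
the first `i-1` requests are matched as by the algorithm, the `i`-th is matched
with `s`, and the rest are matched by the algorithm's choice function. -/
def hybridRun (S : Finset X) (f : X → Finset X → X) (c : X → ℕ)
    (σ : List X) (i : ℕ) (s : X) : List X :=
  runC S f c (σ.take (i-1)) ++
    s :: runC S f (decCap (useCaps c (runC S f c (σ.take (i-1)))) s) (σ.drop i)

/-- The data produced by the singleton-difference lemma for the hybrid `H_{i,s}`
(unit capacities): for `i ≤ t ≤ t*` the free sets of `A` and of `H_{i,s}` differ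
exactly by the singletons `{a t}` and `{h t}`, and they agree for `t ≥ t* + 1`. -/
def HybridData (S : Finset X) (f : X → Finset X → X) (σ : List X)
    (i : ℕ) (s : X) (tstar : ℕ) (a h : ℕ → X) : Prop :=
  i ≤ tstar ∧ tstar + 1 ≤ S.card ∧
  a i = s ∧ h i = (runC S f (fun _ => 1) σ).getD (i-1) s ∧
  (∀ t, i ≤ t → t ≤ tstar →
    freeAfter S (fun _ => 1) (runC S f (fun _ => 1) σ) t \
        freeAfter S (fun _ => 1) (hybridRun S f (fun _ => 1) σ i s) t = {a t} ∧
    freeAfter S (fun _ => 1) (hybridRun S f (fun _ => 1) σ i s) t \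
        freeAfter S (fun _ => 1) (runC S f (fun _ => 1) σ) t = {h t}) ∧
  ∀ t, tstar + 1 ≤ t →
    freeAfter S (fun _ => 1) (runC S f (fun _ => 1) σ) t =
      freeAfter S (fun _ => 1) (hybridRun S f (fun _ => 1) σ i s) t

section AuxLemmas

set_option linter.unusedSectionVars false

lemma useCaps_apply (c : X → ℕ) (ms : List X) (x : X) :
    useCaps c ms x = c x - ms.count x := by
  induction ms generalizing c with
  | nil => simp [useCaps]
  | cons m ms ih =>
    rw [useCaps, ih, List.count_cons]
    simp only [decCap]
    by_cases h : x = m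
    · subst h; simp; omega
    · simp [h, Ne.symm h]

lemma useCaps_append (c : X → ℕ) (l1 l2 : List X) :
    useCaps c (l1 ++ l2) = useCaps (useCaps c l1) l2 := by
  induction l1 generalizing c with
  | nil => simp [useCaps]
  | cons m ms ih => simp [useCaps, ih]

lemma runC_length (S : Finset X) (f : X → Finset X → X) (c : X → ℕ) (σ : List X) :
    (runC S f c σ).length = σ.length := by
  induction σ generalizing c with
  | nil => simp [runC]
  | cons r rs ih => simp [runC, ih]

lemma runC_getD (S : Finset X) (f : X → Finset X → X) (σ : List X) (c : X → ℕ)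
    (t : ℕ) (ht : t < σ.length) (d : X) :
    (runC S f c σ).getD t d
      = f (σ.getD t d) (freeOf S (useCaps c ((runC S f c σ).take t))) := by
  induction σ generalizing c t with
  | nil => simp at ht
  | cons r rs ih =>
    cases t with
    | zero => simp [runC, useCaps]
    | succ t =>
      simp only [runC, List.getD_cons_succ, List.take_succ_cons, useCaps]
      exact ih _ t (by simpa using ht)

lemma hybridRun_length (S : Finset X) (f : X → Finset X → X) (c : X → ℕ)
    (σ : List X) (i : ℕ) (s : X) (h1 : 1 ≤ i) (h2 : i ≤ σ.length) :
    (hybridRun S f c σ i s).length = σ.length := by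
  simp [hybridRun, runC_length, List.length_take, List.length_drop]
  omega

lemma hybridRun_getD (S : Finset X) (f : X → Finset X → X) (σ : List X)
    (c : X → ℕ) (i : ℕ) (s : X) (t : ℕ) (d : X)
    (h1 : 1 ≤ i) (hit : i ≤ t) (ht : t < σ.length) :
    (hybridRun S f c σ i s).getD t d
      = f (σ.getD t d) (freeOf S (useCaps c ((hybridRun S f c σ i s).take t))) := by
  have hP : (runC S f c (σ.take (i-1))).length = i - 1 := by
    rw [runC_length, List.length_take]; omega
  set P := runC S f c (σ.take (i-1)) with hPdef
  set c' := decCap (useCaps c P) s with hc'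
  set Q := runC S f c' (σ.drop i) with hQdef
  have hhy : hybridRun S f c σ i s = P ++ s :: Q := rfl
  have hl : t - (i - 1) = (t - i) + 1 := by omega
  have htake : (P ++ s :: Q).take t = P ++ s :: Q.take (t - i) := by
    rw [List.take_append, List.take_of_length_le (by omega), hP, hl,
      List.take_succ_cons]
  have hgd : (P ++ s :: Q).getD t d = Q.getD (t - i) d := by
    rw [List.getD_append_right _ _ _ _ (by omega), hP, hl, List.getD_cons_succ]
  rw [hhy, hgd, htake]
  have hQlen : t - i < (σ.drop i).length := by rw [List.length_drop]; omega
  rw [runC_getD S f (σ.drop i) c' (t-i) hQlen d]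
  congr 1
  · rw [List.getD_eq_getElem?_getD, List.getD_eq_getElem?_getD, List.getElem?_drop]
    congr 2
    omega
  · rw [useCaps_append]
    rfl

lemma mem_freeAfter (S : Finset X) (ms : List X) (t : ℕ) (x : X) :
    x ∈ freeAfter S (fun _ => 1) ms t ↔ x ∈ S ∧ x ∉ ms.take t := by
  simp [freeAfter, Nat.lt_one_iff, List.count_eq_zero]

lemma freeOf_eq_freeAfter (S : Finset X) (ms : List X) (t : ℕ) :
    freeOf S (useCaps (fun _ => 1) (ms.take t)) = freeAfter S (fun _ => 1) ms t := by
  ext x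
  simp only [freeOf, freeAfter, Finset.mem_filter, useCaps_apply]
  constructor <;> rintro ⟨h1, h2⟩ <;> exact ⟨h1, by omega⟩

lemma freeAfter_succ (S : Finset X) (ms : List X) (t : ℕ) (ht : t < ms.length) (d : X) :
    freeAfter S (fun _ => 1) ms (t + 1)
      = (freeAfter S (fun _ => 1) ms t).erase (ms.getD t d) := by
  ext x
  rw [Finset.mem_erase, mem_freeAfter, mem_freeAfter]
  rw [List.take_succ, List.getD_eq_getElem?_getD, List.getElem?_eq_getElem ht]
  simp only [Option.toList_some, List.mem_append, List.mem_singleton, Option.getD_some]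
  tauto

lemma freeAfter_nonempty (S : Finset X) (ms : List X) (t : ℕ) (ht : t < S.card) :
    (freeAfter S (fun _ => 1) ms t).Nonempty := by
  by_contra hemp
  rw [Finset.not_nonempty_iff_eq_empty] at hemp
  have hsub : S ⊆ (ms.take t).toFinset := by
    intro x hx
    by_contra hxn
    have : x ∈ freeAfter S (fun _ => 1) ms t := by
      rw [mem_freeAfter]; exact ⟨hx, fun h => hxn (List.mem_toFinset.2 h)⟩
    simp [hemp] at this
  have h1 := Finset.card_le_card hsub
  have h2 := (ms.take t).toFinset_card_le
  have h3 : (ms.take t).length ≤ t := by simp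
  omega

set_option maxHeartbeats 1000000 in
lemma core_step (S : Finset X) (rank : X → ℕ) (hinj : Set.InjOn rank (S : Set X))
    (FA FH : Finset X) (hFA : FA ⊆ S) (hFH : FH ⊆ S)
    (a h u v : X) (hA : FA \ FH = {a}) (hH : FH \ FA = {h})
    (hu : u ∈ FA) (humin : ∀ y ∈ FA, rank u ≤ rank y)
    (hv : v ∈ FH) (hvmin : ∀ y ∈ FH, rank v ≤ rank y) :
    (u = v ∧ FA.erase u \ FH.erase v = {a} ∧ FH.erase v \ FA.erase u = {h})
    ∨ (u = a ∧ v = h ∧ FA.erase u = FH.erase v)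
    ∨ (u = a ∧ FA.erase u \ FH.erase v = {v} ∧ FH.erase v \ FA.erase u = {h})
    ∨ (v = h ∧ FA.erase u \ FH.erase v = {a} ∧ FH.erase v \ FA.erase u = {u}) := by
  have hA' : ∀ x, x ∈ FA ∧ x ∉ FH ↔ x = a := by
    intro x; rw [← Finset.mem_singleton, ← hA, Finset.mem_sdiff]
  have hH' : ∀ x, x ∈ FH ∧ x ∉ FA ↔ x = h := by
    intro x; rw [← Finset.mem_singleton, ← hH, Finset.mem_sdiff]
  have haA : a ∈ FA := ((hA' a).2 rfl).1
  have haH : a ∉ FH := ((hA' a).2 rfl).2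
  have hhH : h ∈ FH := ((hH' h).2 rfl).1
  have hhA : h ∉ FA := ((hH' h).2 rfl).2
  by_cases huv : u = v
  · left
    obtain rfl := huv
    have hau : a ≠ u := by intro e; rw [e] at haH; exact haH hv
    have hhu : h ≠ u := by intro e; rw [e] at hhA; exact hhA hu
    refine ⟨rfl, ?_, ?_⟩
    · ext x
      simp only [Finset.mem_sdiff, Finset.mem_erase, Finset.mem_singleton, ne_eq]
      have h1 := hA' x
      constructor
      · intro hx; tauto
      · rintro rfl; tauto
    · ext x
      simp only [Finset.mem_sdiff, Finset.mem_erase, Finset.mem_singleton, ne_eq]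
      have h2 := hH' x
      constructor
      · intro hx; tauto
      · rintro rfl; tauto
  · have key : u = a ∨ v = h := by
      by_contra hk
      push_neg at hk
      have huH : u ∈ FH := by
        by_contra hc; exact hk.1 ((hA' u).1 ⟨hu, hc⟩)
      have hvA : v ∈ FA := by
        by_contra hc; exact hk.2 ((hH' v).1 ⟨hv, hc⟩)
      exact huv (hinj (hFA hu) (hFH hv) (le_antisymm (humin v hvA) (hvmin u huH)))
    by_cases hua : u = a <;> by_cases hvh : v = h
    · right; left
      refine ⟨hua, hvh, ?_⟩
      obtain rfl := hua
      obtain rfl := hvh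
      ext x
      simp only [Finset.mem_erase, ne_eq]
      have h1 := hA' x
      have h2 := hH' x
      have e1 : x = u → x ∉ FH := by rintro rfl; exact haH
      have e2 : x = v → x ∉ FA := by rintro rfl; exact hhA
      tauto
    · right; right; left
      refine ⟨hua, ?_, ?_⟩
      all_goals {
        obtain rfl := hua
        have hvA : v ∈ FA := by
          by_contra hc; exact hvh ((hH' v).1 ⟨hv, hc⟩)
        have hvu : v ≠ u := fun e => huv e.symm
        have hhv : h ≠ v := fun e => hvh e.symm
        have hhu : h ≠ u := by intro e; rw [e] at hhH; exact haH hhH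
        ext x
        simp only [Finset.mem_sdiff, Finset.mem_erase, Finset.mem_singleton, ne_eq]
        have h1 := hA' x
        have h2 := hH' x
        have e1 : x = u → x ∉ FH := by rintro rfl; exact haH
        constructor
        · intro hx; tauto
        · rintro rfl; tauto }
    · right; right; right
      refine ⟨hvh, ?_, ?_⟩
      all_goals {
        obtain rfl := hvh
        have huH : u ∈ FH := by
          by_contra hc; exact hua ((hA' u).1 ⟨hu, hc⟩)
        have hau : a ≠ u := fun e => hua e.symm
        have hav : a ≠ v := by intro e; rw [e] at haH; exact haH hv
        have huvne : u ≠ v := huv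
        ext x
        simp only [Finset.mem_sdiff, Finset.mem_erase, Finset.mem_singleton, ne_eq]
        have h1 := hA' x
        have h2 := hH' x
        have e1 : x = v → x ∉ FA := by rintro rfl; exact hhA
        constructor
        · intro hx; tauto
        · rintro rfl; tauto }
    · rcases key with k | k
      · exact absurd k hua
      · exact absurd k hvh

end AuxLemmas

/-- Properties (P1)–(P3) of the sequences `a_t`, `h_t` given by
the singleton-difference lemma for the hybrid `H_{i,s}`. -/
theorem hybrid_properties
    {X : Type*} [MetricSpace X] [DecidableEq X]
    (S : Finset X) (f : X → Finset X → X) (hf : IsMPFS S f)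
    (σ : List X) (hlen : σ.length = S.card)
    (i : ℕ) (hi : 1 ≤ i) (hik : i ≤ S.card)
    (s : X) (hfree : s ∈ freeAfter S (fun _ => 1) (runC S f (fun _ => 1) σ) (i-1))
    (hne : s ≠ (runC S f (fun _ => 1) σ).getD (i-1) s)
    (tstar : ℕ) (a h : ℕ → X)
    (hdata : HybridData S f σ i s tstar a h) :
    (∀ t, i ≤ t → t + 1 ≤ tstar → a t = a (t+1) ∨ h t = h (t+1)) ∧
    (∀ t, i ≤ t → t + 1 ≤ tstar →
      (a t ≠ a (t+1) →
        (runC S f (fun _ => 1) σ).getD t s = a t ∧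
        (hybridRun S f (fun _ => 1) σ i s).getD t s = a (t+1)) ∧
      (h t ≠ h (t+1) →
        (runC S f (fun _ => 1) σ).getD t s = h (t+1) ∧
        (hybridRun S f (fun _ => 1) σ i s).getD t s = h t)) ∧
    ((runC S f (fun _ => 1) σ).getD tstar s = a tstar ∧
      (hybridRun S f (fun _ => 1) σ i s).getD tstar s = h tstar) := by
  obtain ⟨rank, hinj, hsel⟩ := hf
  obtain ⟨hits, htsS, -, -, hmid, hpost⟩ := hdata
  set A := runC S f (fun _ => 1) σ with hAdef
  set Hy := hybridRun S f (fun _ => 1) σ i s with hHdef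
  have hAlen : A.length = σ.length := runC_length S f _ σ
  have hHlen : Hy.length = σ.length := hybridRun_length S f _ σ i s hi (by omega)
  have hAsel : ∀ t, t < S.card →
      A.getD t s ∈ freeAfter S (fun _ => 1) A t ∧
        ∀ y ∈ freeAfter S (fun _ => 1) A t,
          rank (σ.getD t s) (A.getD t s) ≤ rank (σ.getD t s) y := by
    intro t ht
    have h1 := runC_getD S f σ (fun _ => 1) t (by omega) s
    rw [← hAdef] at h1
    rw [freeOf_eq_freeAfter] at h1
    rw [h1]
    exact hsel _ _ (Finset.filter_subset _ _) (freeAfter_nonempty S A t ht)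
  have hHsel : ∀ t, i ≤ t → t < S.card →
      Hy.getD t s ∈ freeAfter S (fun _ => 1) Hy t ∧
        ∀ y ∈ freeAfter S (fun _ => 1) Hy t,
          rank (σ.getD t s) (Hy.getD t s) ≤ rank (σ.getD t s) y := by
    intro t hit ht
    have h1 := hybridRun_getD S f σ (fun _ => 1) i s t s hi hit (by omega)
    rw [← hHdef] at h1
    rw [freeOf_eq_freeAfter] at h1
    rw [h1]
    exact hsel _ _ (Finset.filter_subset _ _) (freeAfter_nonempty S Hy t ht)
  have step : ∀ t, i ≤ t → t ≤ tstar →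
      (A.getD t s = Hy.getD t s ∧
        (freeAfter S (fun _ => 1) A t).erase (A.getD t s) \
          (freeAfter S (fun _ => 1) Hy t).erase (Hy.getD t s) = {a t} ∧
        (freeAfter S (fun _ => 1) Hy t).erase (Hy.getD t s) \
          (freeAfter S (fun _ => 1) A t).erase (A.getD t s) = {h t})
      ∨ (A.getD t s = a t ∧ Hy.getD t s = h t ∧
          (freeAfter S (fun _ => 1) A t).erase (A.getD t s) =
            (freeAfter S (fun _ => 1) Hy t).erase (Hy.getD t s))
      ∨ (A.getD t s = a t ∧
          (freeAfter S (fun _ => 1) A t).erase (A.getD t s) \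
            (freeAfter S (fun _ => 1) Hy t).erase (Hy.getD t s) = {Hy.getD t s} ∧
          (freeAfter S (fun _ => 1) Hy t).erase (Hy.getD t s) \
            (freeAfter S (fun _ => 1) A t).erase (A.getD t s) = {h t})
      ∨ (Hy.getD t s = h t ∧
          (freeAfter S (fun _ => 1) A t).erase (A.getD t s) \
            (freeAfter S (fun _ => 1) Hy t).erase (Hy.getD t s) = {a t} ∧
          (freeAfter S (fun _ => 1) Hy t).erase (Hy.getD t s) \
            (freeAfter S (fun _ => 1) A t).erase (A.getD t s) = {A.getD t s}) := by
    intro t h1t h2t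
    obtain ⟨hdA, hdH⟩ := hmid t h1t h2t
    obtain ⟨hu, humin⟩ := hAsel t (by omega)
    obtain ⟨hv, hvmin⟩ := hHsel t h1t (by omega)
    exact core_step S (rank (σ.getD t s)) (hinj _)
      (freeAfter S (fun _ => 1) A t) (freeAfter S (fun _ => 1) Hy t)
      (Finset.filter_subset _ _) (Finset.filter_subset _ _)
      (a t) (h t) (A.getD t s) (Hy.getD t s) hdA hdH hu humin hv hvmin
  refine ⟨?_, ?_, ?_⟩
  · -- P1
    intro t h1t h2t
    obtain ⟨hdA2, hdH2⟩ := hmid (t+1) (by omega) h2t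
    rw [freeAfter_succ S A t (by omega) s, freeAfter_succ S Hy t (by omega) s]
      at hdA2 hdH2
    rcases step t h1t (by omega) with
      ⟨huv, e1, e2⟩ | ⟨hua, hvh, e⟩ | ⟨hua, e1, e2⟩ | ⟨hvh, e1, e2⟩
    · exact Or.inl (Finset.singleton_inj.mp (e1.symm.trans hdA2))
    · rw [e, Finset.sdiff_self] at hdA2
      exact absurd hdA2.symm (Finset.singleton_ne_empty _)
    · exact Or.inr (Finset.singleton_inj.mp (e2.symm.trans hdH2))
    · exact Or.inl (Finset.singleton_inj.mp (e1.symm.trans hdA2))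
  · -- P2
    intro t h1t h2t
    obtain ⟨hdA2, hdH2⟩ := hmid (t+1) (by omega) h2t
    rw [freeAfter_succ S A t (by omega) s, freeAfter_succ S Hy t (by omega) s]
      at hdA2 hdH2
    rcases step t h1t (by omega) with
      ⟨huv, e1, e2⟩ | ⟨hua, hvh, e⟩ | ⟨hua, e1, e2⟩ | ⟨hvh, e1, e2⟩
    · have ha : a t = a (t+1) := Finset.singleton_inj.mp (e1.symm.trans hdA2)
      have hh : h t = h (t+1) := Finset.singleton_inj.mp (e2.symm.trans hdH2)
      exact ⟨fun hcon => absurd ha hcon, fun hcon => absurd hh hcon⟩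
    · rw [e, Finset.sdiff_self] at hdA2
      exact absurd hdA2.symm (Finset.singleton_ne_empty _)
    · have hv' : Hy.getD t s = a (t+1) := Finset.singleton_inj.mp (e1.symm.trans hdA2)
      have hh : h t = h (t+1) := Finset.singleton_inj.mp (e2.symm.trans hdH2)
      exact ⟨fun _ => ⟨hua, hv'⟩, fun hcon => absurd hh hcon⟩
    · have hu' : A.getD t s = h (t+1) := Finset.singleton_inj.mp (e2.symm.trans hdH2)
      have ha : a t = a (t+1) := Finset.singleton_inj.mp (e1.symm.trans hdA2)
      exact ⟨fun hcon => absurd ha hcon, fun _ => ⟨hu', hvh⟩⟩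
  · -- P3
    have heq := hpost (tstar+1) le_rfl
    rw [freeAfter_succ S A tstar (by omega) s, freeAfter_succ S Hy tstar (by omega) s]
      at heq
    rcases step tstar hits le_rfl with
      ⟨huv, e1, e2⟩ | ⟨hua, hvh, e⟩ | ⟨hua, e1, e2⟩ | ⟨hvh, e1, e2⟩
    · rw [heq, Finset.sdiff_self] at e1
      exact absurd e1 (Finset.singleton_ne_empty _).symm
    · exact ⟨hua, hvh⟩
    · rw [heq, Finset.sdiff_self] at e1
      exact absurd e1 (Finset.singleton_ne_empty _).symm
    · rw [heq, Finset.sdiff_self] at e1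
      exact absurd e1 (Finset.singleton_ne_empty _).symm
end OFA
end
end

section
/- Let S = {s_1 < … < s_k} with k ≥ 2 be split at a maximum gap into S_1 = {s_1,…,s_a} and S_2 = {s_{a+1},…,s_k} as in the definition of PTCP, let A* = A*[S] be the PTCP algorithm, and consider OFAL(S,1). Let σ = r_1⋯r_k be a request sequence of full length, i an index and s ∈ F_{i−1}(A*) with s ≠ s_{A*}(r_i;σ), and let t*, a_t, h_t (i ≤ t ≤ t*) be as given by the singleton-difference lemma for the hybrid H_{i,s}. If a_i, h_i ∈ S_1, then a_t, h_t ∈ S_1 for every i ≤ t ≤ t*; likewise, if a_i, h_i ∈ S_2, then a_t, h_t ∈ S_2 for every i ≤ t ≤ t*. -/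
noncomputable section

namespace OFAL

/-! ### Basic model: servers are points of the real line, given as a `Finset ℝ`. -/

/-- Decrease the remaining capacity of server `m` by one. -/
def decCap (c : ℝ → ℕ) (m : ℝ) : ℝ → ℕ := fun x => if x = m then c x - 1 else c x

/-- Remaining capacities after a list of matches. -/
def useCaps : (ℝ → ℕ) → List ℝ → (ℝ → ℕ)
  | c, [] => c
  | c, m :: ms => useCaps (decCap c m) ms

/-- The set of servers that are still free. -/
def freeOf (S : Finset ℝ) (c : ℝ → ℕ) : Finset ℝ := S.filter fun x => 0 < c x

/-- Run an algorithm given by a choice function `f` (mapping the position of the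
current request and the current set of free servers to the chosen server)
on a request sequence, producing the list of matched servers. -/
def runC (S : Finset ℝ) (f : ℝ → Finset ℝ → ℝ) : (ℝ → ℕ) → List ℝ → List ℝ
  | _, [] => []
  | c, r :: rs => f r (freeOf S c) :: runC S f (decCap c (f r (freeOf S c))) rs

/-- The server with which the algorithm matches the `i`-th request (0-indexed). -/
def mtch (S : Finset ℝ) (f : ℝ → Finset ℝ → ℝ) (c : ℝ → ℕ) (σ : List ℝ) (i : ℕ) : ℝ :=
  (runC S f c σ).getD i 0

/-- Total cost incurred by the algorithm on a request sequence. -/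
def algCost (S : Finset ℝ) (f : ℝ → Finset ℝ → ℝ) (c : ℝ → ℕ) (σ : List ℝ) : ℝ :=
  ((σ.zip (runC S f c σ)).map fun p => |p.1 - p.2|).sum

def totalCap (S : Finset ℝ) (c : ℝ → ℕ) : ℕ := ∑ x ∈ S, c x

/-- A valid request sequence: at most as many requests as total capacity. -/
def ValidSeq (S : Finset ℝ) (c : ℝ → ℕ) (σ : List ℝ) : Prop := σ.length ≤ totalCap S c

/-- A valid (offline) assignment of requests to servers. -/
def ValidAssign (S : Finset ℝ) (c : ℝ → ℕ) (σ : List ℝ) (m : ℕ → ℝ) : Prop :=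
  (∀ i < σ.length, m i ∈ S) ∧
  ∀ x ∈ S, ((List.range σ.length).filter fun i => m i = x).length ≤ c x

def assignCost (σ : List ℝ) (m : ℕ → ℝ) : ℝ :=
  ∑ i ∈ Finset.range σ.length, |σ.getD i 0 - m i|

/-- Cost of an optimal offline assignment. -/
def Opt (S : Finset ℝ) (c : ℝ → ℕ) (σ : List ℝ) : ℝ :=
  sInf { t | ∃ m, ValidAssign S c σ m ∧ assignCost σ m = t }

/-- Unit capacities. -/
def c1 : ℝ → ℕ := fun _ => 1

/-- The set of servers still free after the first `t` matches of `ms`. -/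
def freeAfter (S : Finset ℝ) (c : ℝ → ℕ) (ms : List ℝ) (t : ℕ) : Finset ℝ :=
  S.filter fun x => (ms.take t).count x < c x

/-! ### MPFS algorithms -/

/-- A choice function is an MPFS algorithm if it is given by a family of linear
orders (priorities, encoded by an injective rank function) on the servers, one for
each request position, and selects the free server with the highest priority. -/
def IsMPFS (S : Finset ℝ) (f : ℝ → Finset ℝ → ℝ) : Prop :=
  ∃ rank : ℝ → ℝ → ℕ,
    (∀ r : ℝ, Set.InjOn (rank r) (S : Set ℝ)) ∧
    ∀ (r : ℝ) (F : Finset ℝ), F ⊆ S → F.Nonempty →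
      f r F ∈ F ∧ ∀ y ∈ F, rank r (f r F) ≤ rank r y

/-! ### Geometry of the server layout -/

/-- `a` and `b` are adjacent servers of `T` with `a < b`. -/
def IsGapPair (T : Finset ℝ) (a b : ℝ) : Prop :=
  a ∈ T ∧ b ∈ T ∧ a < b ∧ ∀ x ∈ T, x ≤ a ∨ b ≤ x

/-- The maximum distance between two adjacent servers. -/
def maxGap (T : Finset ℝ) : ℝ := sSup { d | ∃ a b, IsGapPair T a b ∧ d = b - a }

/-- The minimum distance between two adjacent servers. -/
def minGap (T : Finset ℝ) : ℝ := sInf { d | ∃ a b, IsGapPair T a b ∧ d = b - a }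

/-- `L(T)`: the ratio of the diameter of `T` to its maximum gap (0 if `|T| ≤ 1`). -/
def Lval (T : Finset ℝ) : ℝ :=
  if 2 ≤ T.card then (sSup (T : Set ℝ) - sInf (T : Set ℝ)) / maxGap T else 0

/-- `α(S) = max_{T ⊆ S} L(T)`. -/
def alpha (S : Finset ℝ) : ℝ :=
  (S.powerset.image Lval).max'
    ⟨Lval ∅, Finset.mem_image_of_mem _ (Finset.empty_mem_powerset S)⟩

/-- The aspect ratio `U(S)`: diameter over minimum gap. -/
def Uval (S : Finset ℝ) : ℝ := (sSup (S : Set ℝ) - sInf (S : Set ℝ)) / minGap S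

/-! ### Surrounding servers -/

/-- `x` is a surrounding server of a request at `r` among the free servers `F`. -/
def IsSurrounding (F : Finset ℝ) (r x : ℝ) : Prop :=
  x ∈ F ∧
    (if r ∈ F then x = r
     else (x < r ∧ ∀ y ∈ F, y ≤ x ∨ r < y) ∨ (r < x ∧ ∀ y ∈ F, y < r ∨ x ≤ y))

/-- No element of `F` lies strictly between `u` and `v`. -/
def NoFreeBetween (F : Finset ℝ) (u v : ℝ) : Prop :=
  ∀ y ∈ F, ¬ (min u v < y ∧ y < max u v)

/-- A choice-function algorithm is surrounding-oriented if on every request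
sequence it matches every request with one of its surrounding servers. -/
def SurrOriented (S : Finset ℝ) (f : ℝ → Finset ℝ → ℝ) : Prop :=
  ∀ (c : ℝ → ℕ) (σ : List ℝ), ValidSeq S c σ → ∀ i < σ.length,
    IsSurrounding (freeAfter S c (runC S f c σ) i) (σ.getD i 0) (mtch S f c σ i)

/-! ### Faithful algorithms -/

/-- `τ` is closer than `σ` with respect to the algorithm. -/
def Closer (S : Finset ℝ) (f : ℝ → Finset ℝ → ℝ) (c : ℝ → ℕ) (σ τ : List ℝ) : Prop :=
  τ.length = σ.length ∧
  (∀ i < σ.length, τ.getD i 0 ∈ Set.uIcc (σ.getD i 0) (mtch S f c σ i)) ∧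
  ∃ i < σ.length, |τ.getD i 0 - mtch S f c σ i| < |σ.getD i 0 - mtch S f c σ i|

/-- A faithful algorithm matches a closer request sequence with the same servers. -/
def FaithfulC (S : Finset ℝ) (f : ℝ → Finset ℝ → ℝ) : Prop :=
  ∀ (c : ℝ → ℕ) (σ τ : List ℝ), ValidSeq S c σ → Closer S f c σ τ →
    ∀ i < σ.length, mtch S f c τ i = mtch S f c σ i

/-- `σ` is opposite w.r.t. the algorithm: there is an optimal assignment `m` such
that every request lies between its online server and its offline server. -/
def OppositeC (S : Finset ℝ) (f : ℝ → Finset ℝ → ℝ) (c : ℝ → ℕ) (σ : List ℝ) : Prop :=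
  ∃ m : ℕ → ℝ, ValidAssign S c σ m ∧ assignCost σ m = Opt S c σ ∧
    ∀ i < σ.length, σ.getD i 0 ∈ Set.uIcc (mtch S f c σ i) (m i)

/-! ### Hybrid algorithms (unit capacities) -/

/-- The list of matches of the hybrid algorithm `H_{i,s}` (with `i` 1-indexed):
the first `i-1` requests are matched as by the algorithm, the `i`-th is matched
with `s`, and the rest are matched by the algorithm's choice function. -/
def hybridRun (S : Finset ℝ) (f : ℝ → Finset ℝ → ℝ) (c : ℝ → ℕ)
    (σ : List ℝ) (i : ℕ) (s : ℝ) : List ℝ :=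
  runC S f c (σ.take (i-1)) ++
    s :: runC S f (decCap (useCaps c (runC S f c (σ.take (i-1)))) s) (σ.drop i)

/-- The data produced by the singleton-difference lemma for the hybrid `H_{i,s}`:
for `i ≤ t ≤ t*` the free sets of `A` and of `H_{i,s}` differ exactly by the
singletons `{a t}` and `{h t}`, and they agree for `t ≥ t* + 1`. -/
def HybridData (S : Finset ℝ) (f : ℝ → Finset ℝ → ℝ) (σ : List ℝ)
    (i : ℕ) (s : ℝ) (tstar : ℕ) (a h : ℕ → ℝ) : Prop :=
  i ≤ tstar ∧ tstar + 1 ≤ S.card ∧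
  a i = s ∧ h i = mtch S f c1 σ (i-1) ∧
  (∀ t, i ≤ t → t ≤ tstar →
    freeAfter S c1 (runC S f c1 σ) t \ freeAfter S c1 (hybridRun S f c1 σ i s) t = {a t} ∧
    freeAfter S c1 (hybridRun S f c1 σ i s) t \ freeAfter S c1 (runC S f c1 σ) t = {h t}) ∧
  ∀ t, tstar + 1 ≤ t →
    freeAfter S c1 (runC S f c1 σ) t = freeAfter S c1 (hybridRun S f c1 σ i s) t

/-! ### The condition `C(A,T)` -/

/-- Condition (C3). -/
def C3 (S : Finset ℝ) (f : ℝ → Finset ℝ → ℝ) : Prop :=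
  2 ≤ S.card →
  ∀ σ : List ℝ, σ.length = S.card →
  ∀ i, 1 ≤ i → i ≤ S.card →
  ∀ s ∈ freeAfter S c1 (runC S f c1 σ) (i-1),
    s ≠ mtch S f c1 σ (i-1) →
    (IsSurrounding (freeAfter S c1 (runC S f c1 σ) (i-1)) (σ.getD (i-1) 0) s ∨
      ((∃! x, IsSurrounding (freeAfter S c1 (runC S f c1 σ) (i-1)) (σ.getD (i-1) 0) x) ∧
        NoFreeBetween (freeAfter S c1 (runC S f c1 σ) (i-1)) s (mtch S f c1 σ (i-1)))) →
    ∀ tstar a h, HybridData S f σ i s tstar a h →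
      |h tstar - σ.getD (i-1) 0| ≤ alpha S * |σ.getD (i-1) 0 - a i|

/-- The condition `C(A,S)`: faithful, surrounding-oriented, and (C3). -/
def CProp (S : Finset ℝ) (f : ℝ → Finset ℝ → ℝ) : Prop :=
  FaithfulC S f ∧ SurrOriented S f ∧ C3 S f

/-! ### The PTCP algorithm -/

/-- The critical point offset `x = D(Δ₂+D)/(Δ₁+Δ₂+2D)`. -/
def ptcpX (S : Finset ℝ) (sa sb : ℝ) : ℝ :=
  (sb - sa) * ((sSup (S : Set ℝ) - sb) + (sb - sa)) /
    ((sa - sInf (S : Set ℝ)) + (sSup (S : Set ℝ) - sb) + 2 * (sb - sa))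

/-- `IsPTCP S f` holds iff `f` behaves (on nonempty sets of free servers of `S`)
like the recursively defined algorithm PTCP: split `S` at (some) maximum gap
`(sa, sb)` into `S₁` and `S₂`, requests at most `sa + x` preferring `S₁`,
requests beyond preferring `S₂`. -/
inductive IsPTCP : Finset ℝ → (ℝ → Finset ℝ → ℝ) → Prop
  | single (s : ℝ) (f : ℝ → Finset ℝ → ℝ)
      (h : ∀ (r : ℝ) (F : Finset ℝ), F ⊆ ({s} : Finset ℝ) → F.Nonempty → f r F = s) :
      IsPTCP {s} f
  | split (S : Finset ℝ) (f f₁ f₂ : ℝ → Finset ℝ → ℝ) (sa sb : ℝ)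
      (hcard : 2 ≤ S.card) (hsa : sa ∈ S) (hsb : sb ∈ S) (hlt : sa < sb)
      (hadj : ∀ x ∈ S, x ≤ sa ∨ sb ≤ x)
      (hmax : sb - sa = maxGap S)
      (h1 : IsPTCP (S.filter (· ≤ sa)) f₁)
      (h2 : IsPTCP (S.filter (sb ≤ ·)) f₂)
      (hf : ∀ (r : ℝ) (F : Finset ℝ), F ⊆ S → F.Nonempty →
        f r F =
          if ¬(F.filter (sb ≤ ·)).Nonempty ∨
             (r ≤ sa + ptcpX S sa sb ∧ (F.filter (· ≤ sa)).Nonempty)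
          then f₁ r (F.filter (· ≤ sa))
          else f₂ r (F.filter (sb ≤ ·))) :
      IsPTCP S f

/-! ### The extended algorithm `A_{d,x}` -/

/-- The algorithm `A_{d,x}`: requests at most `sk + x` are served by `A` on `S`
(except when all of `S` is full, then by `s_{k+1}`), requests beyond `sk + x`
are served by `s_{k+1}` (except when it is full, then by `A` on `S`). -/
def extChoice (S : Finset ℝ) (f : ℝ → Finset ℝ → ℝ) (sk skp1 x : ℝ) :
    ℝ → Finset ℝ → ℝ :=
  fun r F =>
    if r ≤ sk + x then
      (if (F ∩ S).Nonempty then f r (F ∩ S) else skp1)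
    else
      (if skp1 ∈ F then skp1 else f r (F ∩ S))

/-! ### General deterministic online algorithms -/

/-- The server with which the online algorithm `A` (which sees the requests
processed so far and the current request) matches the `i`-th request (0-indexed). -/
def omatch (A : List ℝ → ℝ → ℝ) (σ : List ℝ) (i : ℕ) : ℝ := A (σ.take i) (σ.getD i 0)

def ocost (A : List ℝ → ℝ → ℝ) (σ : List ℝ) : ℝ :=
  ∑ i ∈ Finset.range σ.length, |σ.getD i 0 - omatch A σ i|

/-- The set of servers free for the online algorithm just before the `i`-th request. -/
def ofree (S : Finset ℝ) (c : ℝ → ℕ) (A : List ℝ → ℝ → ℝ) (σ : List ℝ) (i : ℕ) :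
    Finset ℝ :=
  S.filter fun x => ((List.range i).filter fun j => omatch A σ j = x).length < c x

/-- `A` is a (correct) deterministic online algorithm for `OFAL(S,c)`:
it always matches a request with a free server. -/
def IsOnline (S : Finset ℝ) (c : ℝ → ℕ) (A : List ℝ → ℝ → ℝ) : Prop :=
  ∀ σ : List ℝ, ValidSeq S c σ → ∀ i < σ.length, omatch A σ i ∈ ofree S c A σ i

def OSurrOriented (S : Finset ℝ) (c : ℝ → ℕ) (A : List ℝ → ℝ → ℝ) : Prop :=
  ∀ σ : List ℝ, ValidSeq S c σ → ∀ i < σ.length,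
    IsSurrounding (ofree S c A σ i) (σ.getD i 0) (omatch A σ i)

def OCloser (A : List ℝ → ℝ → ℝ) (σ τ : List ℝ) : Prop :=
  τ.length = σ.length ∧
  (∀ i < σ.length, τ.getD i 0 ∈ Set.uIcc (σ.getD i 0) (omatch A σ i)) ∧
  ∃ i < σ.length, |τ.getD i 0 - omatch A σ i| < |σ.getD i 0 - omatch A σ i|

def OFaithful (S : Finset ℝ) (c : ℝ → ℕ) (A : List ℝ → ℝ → ℝ) : Prop :=
  ∀ σ τ : List ℝ, ValidSeq S c σ → OCloser A σ τ →
    ∀ i < σ.length, omatch A τ i = omatch A σ i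

def OOpposite (S : Finset ℝ) (c : ℝ → ℕ) (A : List ℝ → ℝ → ℝ) (σ : List ℝ) : Prop :=
  ∃ m : ℕ → ℝ, ValidAssign S c σ m ∧ assignCost σ m = Opt S c σ ∧
    ∀ i < σ.length, σ.getD i 0 ∈ Set.uIcc (omatch A σ i) (m i)

/-- `Rate(σ) = A(σ)/Opt(σ)`, with the conventions for `Opt(σ) = 0`. -/
def Rate (S : Finset ℝ) (c : ℝ → ℕ) (A : List ℝ → ℝ → ℝ) (σ : List ℝ) : EReal :=
  if 0 < Opt S c σ then (((ocost A σ) / Opt S c σ : ℝ) : EReal)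
  else if 0 < ocost A σ then ⊤ else 1

/-! ### The permutation algorithm -/

/-- An execution of the permutation algorithm on `σ`, producing matches `p`:
there is a chain of minimum-cost assignments of the prefixes whose used server
multisets grow one server at a time, `p i` being the server added at step `i`. -/
def PermExec (S : Finset ℝ) (c : ℝ → ℕ) (σ : List ℝ) (p : ℕ → ℝ) : Prop :=
  ∃ M : ℕ → ℕ → ℝ,
    (∀ i ≤ σ.length,
      ValidAssign S c (σ.take i) (M i) ∧
      assignCost (σ.take i) (M i) = Opt S c (σ.take i)) ∧
    ∀ i < σ.length,
      (((List.range (i+1)).map (M (i+1)) : List ℝ) : Multiset ℝ) =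
        p i ::ₘ (((List.range i).map (M i) : List ℝ) : Multiset ℝ)

def execCost (σ : List ℝ) (p : ℕ → ℝ) : ℝ :=
  ∑ i ∈ Finset.range σ.length, |σ.getD i 0 - p i|


/-! The free sets of `A*` and of the hybrid differ by the singletons `{a_t}` and `{h_t}`, so
`a_t, h_t ∈ P` (for a half `P`) says exactly that the two free sets agree outside `P`. This
agreement propagates: both algorithms serve `r_t` by the same choice function, and when the two
free sets meet `P` and agree outside it, the top-level rule of PTCP takes the same branch for
both; the branch into `P` chooses inside `P` for both, while the other branch sees identical
inputs and chooses the same server. Removing the chosen servers keeps the agreement. -/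

section FinsetLemmas

variable {α : Type*} [DecidableEq α]

lemma sdiff_eq_sdiff_iff_of_sdiff_eq_singleton {A B P : Finset α} {x y : α}
    (hx : A \ B = {x}) (hy : B \ A = {y}) : A \ P = B \ P ↔ x ∈ P ∧ y ∈ P := by
  simp only [Finset.ext_iff, Finset.mem_sdiff, Finset.mem_singleton] at hx hy ⊢
  grind

lemma erase_sdiff_eq_erase_sdiff {A B P : Finset α} {x y : α} (h : A \ P = B \ P)
    (hxy : x = y ∨ x ∈ P ∧ y ∈ P) : A.erase x \ P = B.erase y \ P := by
  rw [Finset.erase_sdiff_comm, Finset.erase_sdiff_comm, h]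
  rcases hxy with rfl | ⟨hxP, hyP⟩
  · rfl
  · rw [Finset.erase_eq_of_notMem fun hx => (Finset.mem_sdiff.1 hx).2 hxP,
      Finset.erase_eq_of_notMem fun hy => (Finset.mem_sdiff.1 hy).2 hyP]

lemma filter_eq_filter_of_sdiff_eq {A B P : Finset α} {q : α → Prop} [DecidablePred q]
    (hq : ∀ y ∈ P, ¬ q y) (h : A \ P = B \ P) : A.filter q = B.filter q := by
  simp only [Finset.ext_iff, Finset.mem_sdiff, Finset.mem_filter] at h ⊢
  grind

end FinsetLemmas

lemma useCaps_append (c : ℝ → ℕ) (l₁ l₂ : List ℝ) :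
    useCaps c (l₁ ++ l₂) = useCaps (useCaps c l₁) l₂ := by
  induction l₁ generalizing c with
  | nil => rfl
  | cons m ms ih => exact ih (decCap c m)

lemma useCaps_apply (c : ℝ → ℕ) (l : List ℝ) (x : ℝ) :
    useCaps c l x = c x - l.count x := by
  induction l generalizing c with
  | nil => simp [useCaps]
  | cons m ms ih =>
    rw [useCaps, ih, decCap, List.count_cons]
    by_cases hx : x = m
    · simp only [hx, if_true, beq_self_eq_true]
      omega
    · simp [hx, beq_false_of_ne (Ne.symm hx)]

lemma freeAfter_eq_freeOf (S : Finset ℝ) (c : ℝ → ℕ) (ms : List ℝ) (t : ℕ) :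
    freeAfter S c ms t = freeOf S (useCaps c (ms.take t)) := by
  ext x
  simp only [freeAfter, freeOf, Finset.mem_filter, useCaps_apply, Nat.sub_pos_iff_lt]

lemma freeAfter_c1_succ (S : Finset ℝ) (ms : List ℝ) (t : ℕ) (ht : t < ms.length) :
    freeAfter S c1 ms (t + 1) = (freeAfter S c1 ms t).erase (ms.getD t 0) := by
  ext x
  rw [List.getD_eq_getElem _ _ ht]
  simp only [freeAfter, c1, Finset.mem_filter, Finset.mem_erase, List.take_add_one,
    List.getElem?_eq_getElem ht, Option.toList_some, List.count_append, List.count_singleton]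
  by_cases hx : x = ms[t] <;> simp [hx, Ne.symm]

section Runs

variable (S : Finset ℝ) (f : ℝ → Finset ℝ → ℝ)

lemma runC_length (c : ℝ → ℕ) (σ : List ℝ) : (runC S f c σ).length = σ.length := by
  induction σ generalizing c with
  | nil => rfl
  | cons r σ ih => simp [runC, ih]

lemma getD_append_runC (c : ℝ → ℕ) (L τ : List ℝ) (t : ℕ) (ht : t < τ.length) :
    (L ++ runC S f (useCaps c L) τ).getD (L.length + t) 0 =
      f (τ.getD t 0) (freeAfter S c (L ++ runC S f (useCaps c L) τ) (L.length + t)) := by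
  induction τ generalizing L t with
  | nil => simp at ht
  | cons r τ ih =>
    cases t with
    | zero => simp [runC, freeAfter_eq_freeOf]
    | succ t =>
      have hrun : L ++ runC S f (useCaps c L) (r :: τ) =
          (L ++ [f r (freeOf S (useCaps c L))]) ++
            runC S f (useCaps c (L ++ [f r (freeOf S (useCaps c L))])) τ := by
        simp [runC, useCaps_append, useCaps]
      rw [hrun, show L.length + (t + 1) = (L ++ [f r (freeOf S (useCaps c L))]).length + t by
        simp; omega]
      exact ih _ t (by simpa using ht)

lemma freeAfter_append_runC_succ (L τ : List ℝ) (t : ℕ) (hLt : L.length ≤ t)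
    (ht : t < L.length + τ.length) :
    freeAfter S c1 (L ++ runC S f (useCaps c1 L) τ) (t + 1) =
      (freeAfter S c1 (L ++ runC S f (useCaps c1 L) τ) t).erase
        (f (τ.getD (t - L.length) 0)
          (freeAfter S c1 (L ++ runC S f (useCaps c1 L) τ) t)) := by
  obtain ⟨u, rfl⟩ := Nat.exists_eq_add_of_le hLt
  rw [freeAfter_c1_succ _ _ _ (by simp [runC_length]; omega),
    getD_append_runC S f c1 L τ u (by omega), Nat.add_sub_cancel_left]

lemma freeAfter_runC_succ (σ : List ℝ) (t : ℕ) (ht : t < σ.length) :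
    freeAfter S c1 (runC S f c1 σ) (t + 1) =
      (freeAfter S c1 (runC S f c1 σ) t).erase
        (f (σ.getD t 0) (freeAfter S c1 (runC S f c1 σ) t)) := by
  simpa [useCaps] using
    freeAfter_append_runC_succ S f [] σ t (Nat.zero_le t) (by simpa using ht)

lemma freeAfter_hybridRun_succ (σ : List ℝ) (i : ℕ) (s : ℝ) (t : ℕ) (hi : 1 ≤ i)
    (hit : i ≤ t) (ht : t < σ.length) :
    freeAfter S c1 (hybridRun S f c1 σ i s) (t + 1) =
      (freeAfter S c1 (hybridRun S f c1 σ i s) t).erase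
        (f (σ.getD t 0) (freeAfter S c1 (hybridRun S f c1 σ i s) t)) := by
  set L := runC S f c1 (σ.take (i - 1)) ++ [s]
  have hL : L.length = i := by simp [L, runC_length]; omega
  have hhyb : hybridRun S f c1 σ i s = L ++ runC S f (useCaps c1 L) (σ.drop i) := by
    simp [L, hybridRun, useCaps_append, useCaps]
  have hr : (σ.drop i).getD (t - L.length) 0 = σ.getD t 0 := by
    simp [List.getD_eq_getElem?_getD, hL, Nat.add_sub_cancel' hit]
  rw [hhyb, freeAfter_append_runC_succ S f L _ t (by omega) (by simp; omega), hr]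

end Runs

lemma IsPTCP.choose_mem {T : Finset ℝ} {g : ℝ → Finset ℝ → ℝ} (hT : IsPTCP T g)
    {r : ℝ} {F : Finset ℝ} (hF : F ⊆ T) (hne : F.Nonempty) : g r F ∈ F := by
  induction hT generalizing F with
  | single s g hg =>
    obtain ⟨x, hx⟩ := hne
    rw [hg r F hF ⟨x, hx⟩, ← Finset.mem_singleton.1 (hF hx)]
    exact hx
  | split S g g₁ g₂ sa sb _ _ _ _ hadj _ _ _ hg ih₁ ih₂ =>
    rw [hg r F hF hne]
    split_ifs with hc
    · refine Finset.filter_subset _ _ (ih₁ (Finset.filter_subset_filter _ hF) ?_)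
      rcases hc with hc | hc
      · obtain ⟨x, hx⟩ := hne
        rcases hadj x (hF hx) with hxa | hxb
        · exact ⟨x, Finset.mem_filter.2 ⟨hx, hxa⟩⟩
        · exact absurd ⟨x, Finset.mem_filter.2 ⟨hx, hxb⟩⟩ hc
      · exact hc.2
    · exact Finset.filter_subset _ _
        (ih₂ (Finset.filter_subset_filter _ hF) (not_not.1 (not_or.1 hc).1))

def ChoiceAgreesOff (S P : Finset ℝ) (f : ℝ → Finset ℝ → ℝ) : Prop :=
  ∀ (r : ℝ) (FA FH : Finset ℝ), FA ⊆ S → FH ⊆ S → FA \ P = FH \ P →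
    (FA ∩ P).Nonempty → (FH ∩ P).Nonempty →
      f r FA = f r FH ∨ f r FA ∈ P ∧ f r FH ∈ P

lemma ChoiceAgreesOff.mem_of_sdiff_eq_singleton {S P : Finset ℝ} {f : ℝ → Finset ℝ → ℝ}
    (hf : ChoiceAgreesOff S P f) {FA FH : ℕ → Finset ℝ} {r a h : ℕ → ℝ} {i tstar : ℕ}
    (hsubA : ∀ t, FA t ⊆ S) (hsubH : ∀ t, FH t ⊆ S)
    (hA : ∀ t, i ≤ t → t < tstar → FA (t + 1) = (FA t).erase (f (r t) (FA t)))
    (hH : ∀ t, i ≤ t → t < tstar → FH (t + 1) = (FH t).erase (f (r t) (FH t)))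
    (hdiff : ∀ t, i ≤ t → t ≤ tstar → FA t \ FH t = {a t} ∧ FH t \ FA t = {h t})
    (hai : a i ∈ P) (hhi : h i ∈ P) :
    ∀ t, i ≤ t → t ≤ tstar → a t ∈ P ∧ h t ∈ P := by
  have hiff t (hit : i ≤ t) (hts : t ≤ tstar) :
      FA t \ P = FH t \ P ↔ a t ∈ P ∧ h t ∈ P :=
    sdiff_eq_sdiff_iff_of_sdiff_eq_singleton (hdiff t hit hts).1 (hdiff t hit hts).2
  suffices hagree : ∀ t, i ≤ t → t ≤ tstar → FA t \ P = FH t \ P from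
    fun t hit hts => (hiff t hit hts).1 (hagree t hit hts)
  intro t hit
  induction t, hit using Nat.le_induction with
  | base => exact fun hits => (hiff i le_rfl hits).2 ⟨hai, hhi⟩
  | succ t hit ih =>
    intro hts
    have hagree := ih (by omega)
    obtain ⟨haP, hhP⟩ := (hiff t hit (by omega)).1 hagree
    have haA : a t ∈ FA t :=
      Finset.singleton_subset_iff.1 ((hdiff t hit (by omega)).1 ▸ Finset.sdiff_subset)
    have hhH : h t ∈ FH t :=
      Finset.singleton_subset_iff.1 ((hdiff t hit (by omega)).2 ▸ Finset.sdiff_subset)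
    rw [hA t hit hts, hH t hit hts]
    exact erase_sdiff_eq_erase_sdiff hagree <| hf (r t) _ _ (hsubA t) (hsubH t) hagree
      ⟨a t, Finset.mem_inter.2 ⟨haA, haP⟩⟩ ⟨h t, Finset.mem_inter.2 ⟨hhH, hhP⟩⟩

lemma IsPTCP.choose_mem_filter {S F : Finset ℝ} {p : ℝ → Prop} [DecidablePred p]
    {g : ℝ → Finset ℝ → ℝ} (hg : IsPTCP (S.filter p) g) (r : ℝ) (hF : F ⊆ S)
    (hne : (F.filter p).Nonempty) : g r (F.filter p) ∈ S.filter p :=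
  Finset.filter_subset_filter _ hF (hg.choose_mem (Finset.filter_subset_filter _ hF) hne)

lemma filter_nonempty_of_inter_filter_nonempty {S F : Finset ℝ} {p : ℝ → Prop}
    [DecidablePred p] (h : (F ∩ S.filter p).Nonempty) : (F.filter p).Nonempty := by
  obtain ⟨y, hy⟩ := h
  rw [Finset.mem_inter, Finset.mem_filter] at hy
  exact ⟨y, Finset.mem_filter.2 ⟨hy.1, hy.2.2⟩⟩

section PTCPSplit

variable {S : Finset ℝ} {f f₁ f₂ : ℝ → Finset ℝ → ℝ} {sa sb : ℝ}

lemma choiceAgreesOff_filter_le (hlt : sa < sb) (h1 : IsPTCP (S.filter (· ≤ sa)) f₁)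
    (hf : ∀ (r : ℝ) (F : Finset ℝ), F ⊆ S → F.Nonempty →
      f r F =
        if ¬(F.filter (sb ≤ ·)).Nonempty ∨
           (r ≤ sa + ptcpX S sa sb ∧ (F.filter (· ≤ sa)).Nonempty)
        then f₁ r (F.filter (· ≤ sa))
        else f₂ r (F.filter (sb ≤ ·))) :
    ChoiceAgreesOff S (S.filter (· ≤ sa)) f := by
  intro r FA FH hA hH hagree hmeetA hmeetH
  have hneA := filter_nonempty_of_inter_filter_nonempty hmeetA
  have hneH := filter_nonempty_of_inter_filter_nonempty hmeetH
  have hright : FA.filter (sb ≤ ·) = FH.filter (sb ≤ ·) :=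
    filter_eq_filter_of_sdiff_eq (fun y hy hsb => by
      linarith [(Finset.mem_filter.1 hy).2]) hagree
  rw [hf r FA hA (hneA.mono (Finset.filter_subset _ _)),
    hf r FH hH (hneH.mono (Finset.filter_subset _ _)), hright]
  simp only [hneA, hneH, and_true]
  split_ifs
  · exact Or.inr ⟨h1.choose_mem_filter r hA hneA, h1.choose_mem_filter r hH hneH⟩
  · exact Or.inl rfl

lemma choiceAgreesOff_le_filter (hlt : sa < sb) (h2 : IsPTCP (S.filter (sb ≤ ·)) f₂)
    (hf : ∀ (r : ℝ) (F : Finset ℝ), F ⊆ S → F.Nonempty →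
      f r F =
        if ¬(F.filter (sb ≤ ·)).Nonempty ∨
           (r ≤ sa + ptcpX S sa sb ∧ (F.filter (· ≤ sa)).Nonempty)
        then f₁ r (F.filter (· ≤ sa))
        else f₂ r (F.filter (sb ≤ ·))) :
    ChoiceAgreesOff S (S.filter (sb ≤ ·)) f := by
  intro r FA FH hA hH hagree hmeetA hmeetH
  have hneA := filter_nonempty_of_inter_filter_nonempty hmeetA
  have hneH := filter_nonempty_of_inter_filter_nonempty hmeetH
  have hleft : FA.filter (· ≤ sa) = FH.filter (· ≤ sa) :=
    filter_eq_filter_of_sdiff_eq (fun y hy hsa => by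
      linarith [(Finset.mem_filter.1 hy).2]) hagree
  rw [hf r FA hA (hneA.mono (Finset.filter_subset _ _)),
    hf r FH hH (hneH.mono (Finset.filter_subset _ _)), hleft]
  simp only [hneA, hneH, not_true_eq_false, false_or]
  split_ifs
  · exact Or.inl rfl
  · exact Or.inr ⟨h2.choose_mem_filter r hA hneA, h2.choose_mem_filter r hH hneH⟩

end PTCPSplit

theorem ptcp_hybrid_stays_in_half_general
    (S : Finset ℝ)
    (f f₁ f₂ : ℝ → Finset ℝ → ℝ) (sa sb : ℝ)
    (hlt : sa < sb)
    (h1 : IsPTCP (S.filter (· ≤ sa)) f₁)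
    (h2 : IsPTCP (S.filter (sb ≤ ·)) f₂)
    (hfdef : ∀ (r : ℝ) (F : Finset ℝ), F ⊆ S → F.Nonempty →
      f r F =
        if ¬(F.filter (sb ≤ ·)).Nonempty ∨
           (r ≤ sa + ptcpX S sa sb ∧ (F.filter (· ≤ sa)).Nonempty)
        then f₁ r (F.filter (· ≤ sa))
        else f₂ r (F.filter (sb ≤ ·)))
    (σ : List ℝ) (hlen : σ.length = S.card)
    (i : ℕ) (hi : 1 ≤ i)
    (s : ℝ)
    (tstar : ℕ) (a h : ℕ → ℝ)
    (hdata : HybridData S f σ i s tstar a h) :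
    (a i ∈ S.filter (· ≤ sa) → h i ∈ S.filter (· ≤ sa) →
      ∀ t, i ≤ t → t ≤ tstar →
        a t ∈ S.filter (· ≤ sa) ∧ h t ∈ S.filter (· ≤ sa)) ∧
    (a i ∈ S.filter (sb ≤ ·) → h i ∈ S.filter (sb ≤ ·) →
      ∀ t, i ≤ t → t ≤ tstar →
        a t ∈ S.filter (sb ≤ ·) ∧ h t ∈ S.filter (sb ≤ ·)) := by
  obtain ⟨-, htstar, -, -, hdiff, -⟩ := hdata
  have hA t (_ : i ≤ t) (hts : t < tstar) := freeAfter_runC_succ S f σ t (by omega)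
  have hH t (hit : i ≤ t) (hts : t < tstar) :=
    freeAfter_hybridRun_succ S f σ i s t hi hit (by omega)
  have hsub (ms : List ℝ) t : freeAfter S c1 ms t ⊆ S := Finset.filter_subset _ _
  exact ⟨(choiceAgreesOff_filter_le hlt h1 hfdef).mem_of_sdiff_eq_singleton (hsub _) (hsub _)
      hA hH hdiff,
    (choiceAgreesOff_le_filter hlt h2 hfdef).mem_of_sdiff_eq_singleton (hsub _) (hsub _)
      hA hH hdiff⟩

/-- For the PTCP algorithm split at a maximum gap into `S₁`
and `S₂` (unit capacities): if `a_i, h_i ∈ S₁` then `a_t, h_t ∈ S₁` for every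
`i ≤ t ≤ t*`, and likewise for `S₂`. -/
theorem ptcp_hybrid_stays_in_half
    (S : Finset ℝ) (hcard : 2 ≤ S.card)
    (f f₁ f₂ : ℝ → Finset ℝ → ℝ) (sa sb : ℝ)
    (hsa : sa ∈ S) (hsb : sb ∈ S) (hlt : sa < sb)
    (hadj : ∀ y ∈ S, y ≤ sa ∨ sb ≤ y)
    (hmax : sb - sa = maxGap S)
    (h1 : IsPTCP (S.filter (· ≤ sa)) f₁)
    (h2 : IsPTCP (S.filter (sb ≤ ·)) f₂)
    (hfdef : ∀ (r : ℝ) (F : Finset ℝ), F ⊆ S → F.Nonempty →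
      f r F =
        if ¬(F.filter (sb ≤ ·)).Nonempty ∨
           (r ≤ sa + ptcpX S sa sb ∧ (F.filter (· ≤ sa)).Nonempty)
        then f₁ r (F.filter (· ≤ sa))
        else f₂ r (F.filter (sb ≤ ·)))
    (σ : List ℝ) (hlen : σ.length = S.card)
    (i : ℕ) (hi : 1 ≤ i) (hik : i ≤ S.card)
    (s : ℝ) (hfree : s ∈ freeAfter S c1 (runC S f c1 σ) (i-1))
    (hne : s ≠ mtch S f c1 σ (i-1))
    (tstar : ℕ) (a h : ℕ → ℝ)
    (hdata : HybridData S f σ i s tstar a h) :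
    (a i ∈ S.filter (· ≤ sa) → h i ∈ S.filter (· ≤ sa) →
      ∀ t, i ≤ t → t ≤ tstar →
        a t ∈ S.filter (· ≤ sa) ∧ h t ∈ S.filter (· ≤ sa)) ∧
    (a i ∈ S.filter (sb ≤ ·) → h i ∈ S.filter (sb ≤ ·) →
      ∀ t, i ≤ t → t ≤ tstar →
        a t ∈ S.filter (sb ≤ ·) ∧ h t ∈ S.filter (sb ≤ ·)) :=
  ptcp_hybrid_stays_in_half_general S f f₁ f₂ sa sb hlt h1 h2 hfdef σ hlen i hi s tstar a h hdata

end OFAL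
end
end
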